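/- arXiv:1906.10522 — 4 statements merged into one kernel-verified Lean document; each statement's English description precedes it below -/
import Mathlib

section
/- Let (μ_n) be probability measures on [0,∞) and μ a probability measure on [0,∞). If the Laplace transforms ∫ e^{-tx} dμ_n(x) converge to ∫ e^{-tx} dμ(x) for every t ≥ 0, then μ_n converges weakly to μ. -/
open MeasureTheory Filter

/-- The compactifying map `x ↦ exp (-(max x 0))`, with values in `(0,1] ⊆ [0,1]`. -/
noncomputable def lphi (x : ℝ) : ℝ := Real.exp (-(max x 0))

lemma lphi_continuous : Continuous lphi :=
  Real.continuous_exp.comp ((continuous_id.max continuous_const).neg)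

lemma lphi_mem (x : ℝ) : lphi x ∈ Set.Icc (0:ℝ) 1 := by
  constructor
  · exact (Real.exp_pos _).le
  · exact Real.exp_le_one_iff.mpr (by simp [le_max_right])

lemma ae_nonneg_of_null_Iio {m : Measure ℝ} (h : m (Set.Iio 0) = 0) :
    ∀ᵐ x ∂m, 0 ≤ x := by
  rw [ae_iff]
  have : {x : ℝ | ¬ 0 ≤ x} = Set.Iio 0 := by ext x; simp [not_le]
  rw [this]; exact h

lemma integrable_comp_lphi {m : Measure ℝ} [IsProbabilityMeasure m] {g : ℝ → ℝ}
    (hg : Continuous g) : Integrable (fun x => g (lphi x)) m := by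
  obtain ⟨C, hC⟩ := (isCompact_Icc (a := (0:ℝ)) (b := 1)).exists_bound_of_continuousOn
    hg.continuousOn
  exact (integrable_const C).mono' ((hg.comp lphi_continuous).aestronglyMeasurable)
    (ae_of_all _ fun x => hC _ (lphi_mem x))

lemma lphi_pow_eq {x : ℝ} (hx : 0 ≤ x) (k : ℕ) :
    (lphi x) ^ k = Real.exp (-(k:ℝ) * x) := by
  rw [lphi, max_eq_left hx, ← Real.exp_nat_mul]
  ring_nf

theorem weak_convergence_of_laplace_monomial {μ : ℕ → Measure ℝ} {ν : Measure ℝ}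
    [∀ n, IsProbabilityMeasure (μ n)] [IsProbabilityMeasure ν]
    (hμ : ∀ n, μ n (Set.Iio 0) = 0) (hν : ν (Set.Iio 0) = 0)
    (hLaplace : ∀ t : ℝ, 0 ≤ t →
      Tendsto (fun n => ∫ x, Real.exp (-t * x) ∂(μ n)) atTop
        (nhds (∫ x, Real.exp (-t * x) ∂ν))) (k : ℕ) :
    Tendsto (fun n => ∫ x, (lphi x) ^ k ∂(μ n)) atTop
      (nhds (∫ x, (lphi x) ^ k ∂ν)) := by
  have key : ∀ (m : Measure ℝ), m (Set.Iio 0) = 0 →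
      ∫ x, (lphi x) ^ k ∂m = ∫ x, Real.exp (-(k:ℝ) * x) ∂m := by
    intro m hm
    refine integral_congr_ae ((ae_nonneg_of_null_Iio hm).mono fun x hx => ?_)
    exact lphi_pow_eq hx k
  have h1 : (fun n => ∫ x, (lphi x) ^ k ∂(μ n))
      = fun n => ∫ x, Real.exp (-(k:ℝ) * x) ∂(μ n) :=
    funext fun n => key (μ n) (hμ n)
  rw [h1, key ν hν]
  exact hLaplace k (Nat.cast_nonneg k)

theorem weak_convergence_of_laplace_poly {μ : ℕ → Measure ℝ} {ν : Measure ℝ}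
    [∀ n, IsProbabilityMeasure (μ n)] [IsProbabilityMeasure ν]
    (hμ : ∀ n, μ n (Set.Iio 0) = 0) (hν : ν (Set.Iio 0) = 0)
    (hLaplace : ∀ t : ℝ, 0 ≤ t →
      Tendsto (fun n => ∫ x, Real.exp (-t * x) ∂(μ n)) atTop
        (nhds (∫ x, Real.exp (-t * x) ∂ν))) (p : Polynomial ℝ) :
    Tendsto (fun n => ∫ x, p.eval (lphi x) ∂(μ n)) atTop
      (nhds (∫ x, p.eval (lphi x) ∂ν)) := by
  have expand : ∀ (m : Measure ℝ) (_ : IsProbabilityMeasure m),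
      ∫ x, p.eval (lphi x) ∂m
        = ∑ i ∈ Finset.range (p.natDegree + 1), p.coeff i * ∫ x, (lphi x) ^ i ∂m := by
    intro m hm
    have h1 : (fun x => p.eval (lphi x))
        = fun x => ∑ i ∈ Finset.range (p.natDegree + 1), p.coeff i * (lphi x) ^ i :=
      funext fun x => Polynomial.eval_eq_sum_range _
    rw [h1, integral_finset_sum _ (fun i _ =>
      (integrable_comp_lphi (continuous_pow i)).const_mul _)]
    exact Finset.sum_congr rfl fun i _ => integral_const_mul _ _
  have h1 : (fun n => ∫ x, p.eval (lphi x) ∂(μ n))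
      = fun n => ∑ i ∈ Finset.range (p.natDegree + 1), p.coeff i * ∫ x, (lphi x) ^ i ∂(μ n) :=
    funext fun n => expand (μ n) inferInstance
  rw [h1, expand ν inferInstance]
  exact tendsto_finset_sum _ fun i _ =>
    (weak_convergence_of_laplace_monomial hμ hν hLaplace i).const_mul _

/-- Key lemma: convergence of integrals of `g ∘ lphi` for any continuous `g`. -/
theorem weak_convergence_of_laplace_comp {μ : ℕ → Measure ℝ} {ν : Measure ℝ}
    [∀ n, IsProbabilityMeasure (μ n)] [IsProbabilityMeasure ν]
    (hμ : ∀ n, μ n (Set.Iio 0) = 0) (hν : ν (Set.Iio 0) = 0)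
    (hLaplace : ∀ t : ℝ, 0 ≤ t →
      Tendsto (fun n => ∫ x, Real.exp (-t * x) ∂(μ n)) atTop
        (nhds (∫ x, Real.exp (-t * x) ∂ν))) {g : ℝ → ℝ} (hg : Continuous g) :
    Tendsto (fun n => ∫ x, g (lphi x) ∂(μ n)) atTop
      (nhds (∫ x, g (lphi x) ∂ν)) := by
  rw [Metric.tendsto_atTop]
  intro ε hε
  obtain ⟨p, hp⟩ := exists_polynomial_near_of_continuousOn 0 1 g hg.continuousOn (ε/4)
    (by linarith)
  have bound : ∀ (m : Measure ℝ) (_ : IsProbabilityMeasure m),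
      |(∫ x, g (lphi x) ∂m) - ∫ x, p.eval (lphi x) ∂m| ≤ ε/4 := by
    intro m hm
    rw [← integral_sub (integrable_comp_lphi hg)
      (integrable_comp_lphi (Polynomial.continuous p))]
    have h := norm_integral_le_of_norm_le_const (μ := m) (C := ε/4)
      (f := fun x => g (lphi x) - p.eval (lphi x))
      (ae_of_all _ fun x => by
        have := hp (lphi x) (lphi_mem x)
        rw [Real.norm_eq_abs, abs_sub_comm]
        linarith [this])
    simpa using h
  have hpt := weak_convergence_of_laplace_poly hμ hν hLaplace p
  rw [Metric.tendsto_atTop] at hpt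
  obtain ⟨N, hN⟩ := hpt (ε/4) (by linarith)
  refine ⟨N, fun n hn => ?_⟩
  have h1 := bound (μ n) inferInstance
  have h2 := bound ν inferInstance
  have h3 := hN n hn
  rw [Real.dist_eq] at h3 ⊢
  have t1 := abs_sub_le ((∫ x, g (lphi x) ∂(μ n))) (∫ x, p.eval (lphi x) ∂(μ n))
    (∫ x, g (lphi x) ∂ν)
  have t2 := abs_sub_le ((∫ x, p.eval (lphi x) ∂(μ n))) (∫ x, p.eval (lphi x) ∂ν)
    (∫ x, g (lphi x) ∂ν)
  have t3 := abs_sub_comm (∫ x, g (lphi x) ∂ν) (∫ x, p.eval (lphi x) ∂ν)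
  linarith

/-- Tail cutoff function (as a function of `y = lphi x`). -/
noncomputable def lgm (m : ℕ) (y : ℝ) : ℝ :=
  min 1 (max 0 (-(Real.log (max y (Real.exp (-((m:ℝ)+2))))) - ((m:ℝ)+1)))

lemma lgm_continuous (m : ℕ) : Continuous (lgm m) := by
  apply continuous_const.min
  apply continuous_const.max
  apply Continuous.sub _ continuous_const
  apply Continuous.neg
  apply Continuous.log (continuous_id.max continuous_const)
  intro x
  exact ne_of_gt (lt_of_lt_of_le (Real.exp_pos _) (le_max_right _ _))

lemma lgm_nonneg (m : ℕ) (y : ℝ) : 0 ≤ lgm m y :=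
  le_min zero_le_one (le_max_left _ _)

lemma lgm_le_one (m : ℕ) (y : ℝ) : lgm m y ≤ 1 := min_le_left _ _

lemma neg_log_max_lphi {x : ℝ} (hx : 0 ≤ x) (c : ℝ) :
    -(Real.log (max (lphi x) (Real.exp (-c)))) = min x c := by
  rw [lphi, max_eq_left hx]
  rw [Real.exp_monotone.map_max.symm]
  rw [max_neg_neg, Real.log_exp, neg_neg]

lemma lgm_lphi_eq {x : ℝ} (hx : 0 ≤ x) (m : ℕ) :
    lgm m (lphi x) = min 1 (max 0 (min x ((m:ℝ)+2) - ((m:ℝ)+1))) := by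
  rw [lgm, neg_log_max_lphi hx]

lemma lgm_lphi_eq_one {x : ℝ} (hx : 0 ≤ x) {m : ℕ} (hxm : (m:ℝ) + 2 ≤ x) :
    lgm m (lphi x) = 1 := by
  rw [lgm_lphi_eq hx, min_eq_right hxm]
  norm_num

lemma lgm_lphi_tendsto (x : ℝ) :
    Tendsto (fun m : ℕ => lgm m (lphi x)) atTop (nhds 0) := by
  have h : ∀ᶠ m : ℕ in atTop, lgm m (lphi x) = 0 := by
    filter_upwards [eventually_ge_atTop ⌈max x 0⌉₊] with m hm
    have hx0 : max x 0 ≤ (m:ℝ) := le_trans (Nat.le_ceil _) (Nat.cast_le.mpr hm)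
    have h1 : Real.exp (-((m:ℝ)+2)) ≤ lphi x := by
      rw [lphi]
      apply Real.exp_le_exp.mpr
      linarith
    rw [lgm, max_eq_left h1, lphi, Real.log_exp, neg_neg]
    have : max x 0 - ((m:ℝ)+1) ≤ 0 := by linarith
    rw [max_eq_left this, min_eq_right (le_refl 0 |>.trans zero_le_one)]
  exact tendsto_const_nhds.congr' (h.mono fun m hm => hm.symm)

theorem weak_convergence_of_laplace {μ : ℕ → Measure ℝ} {ν : Measure ℝ}
    [∀ n, IsProbabilityMeasure (μ n)] [IsProbabilityMeasure ν]
    (hμ : ∀ n, μ n (Set.Iio 0) = 0) (hν : ν (Set.Iio 0) = 0)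
    (hLaplace : ∀ t : ℝ, 0 ≤ t →
      Tendsto (fun n => ∫ x, Real.exp (-t * x) ∂(μ n)) atTop
        (nhds (∫ x, Real.exp (-t * x) ∂ν))) :
    ∀ f : BoundedContinuousFunction ℝ ℝ,
      Tendsto (fun n => ∫ x, f x ∂(μ n)) atTop (nhds (∫ x, f x ∂ν)) := by
  intro f
  rw [Metric.tendsto_atTop]
  intro ε hε
  set C := ‖f‖ with hCdef
  have hC0 : 0 ≤ C := norm_nonneg f
  set δ : ℝ := ε / (16 * (C + 1)) with hδdef
  have hδ0 : 0 < δ := by positivity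
  -- the tail integrals tend to 0
  have tail : Tendsto (fun m : ℕ => ∫ x, lgm m (lphi x) ∂ν) atTop (nhds 0) := by
    have h := tendsto_integral_of_dominated_convergence (μ := ν) (bound := fun _ => (1:ℝ))
      (F := fun m x => lgm m (lphi x)) (f := fun _ => 0)
      (fun m => ((lgm_continuous m).comp lphi_continuous).aestronglyMeasurable)
      (integrable_const 1)
      (fun m => ae_of_all _ fun x => by
        rw [Real.norm_eq_abs, abs_of_nonneg (lgm_nonneg m _)]; exact lgm_le_one m _)
      (ae_of_all _ fun x => lgm_lphi_tendsto x)
    simpa using h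
  obtain ⟨m, hm⟩ := (tail.eventually_lt_const hδ0).exists
  -- the cut-off version of f
  set G : ℝ → ℝ := fun y => f (-(Real.log (max y (Real.exp (-((m:ℝ)+2)))))) with hGdef
  have contG : Continuous G := by
    apply f.continuous.comp
    apply Continuous.neg
    apply Continuous.log (continuous_id.max continuous_const)
    intro x
    exact ne_of_gt (lt_of_lt_of_le (Real.exp_pos _) (le_max_right _ _))
  -- pointwise bound
  have ptbd : ∀ x : ℝ, 0 ≤ x → ‖f x - G (lphi x)‖ ≤ 2*C * lgm m (lphi x) := by
    intro x hx
    have hGx : G (lphi x) = f (min x ((m:ℝ)+2)) := by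
      rw [hGdef]; simp only []; rw [neg_log_max_lphi hx]
    rcases le_or_gt x ((m:ℝ)+2) with h|h
    · rw [hGx, min_eq_left h, sub_self, norm_zero]
      exact mul_nonneg (by positivity) (lgm_nonneg _ _)
    · rw [lgm_lphi_eq_one hx h.le, mul_one, hGx]
      calc ‖f x - f (min x ((m:ℝ)+2))‖ ≤ ‖f x‖ + ‖f (min x ((m:ℝ)+2))‖ := norm_sub_le _ _
        _ ≤ C + C := add_le_add (f.norm_coe_le_norm x) (f.norm_coe_le_norm _)
        _ = 2*C := by ring
  -- integral bound
  have ibd : ∀ (m' : Measure ℝ) (_ : IsProbabilityMeasure m'), m' (Set.Iio 0) = 0 →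
      |(∫ x, f x ∂m') - ∫ x, G (lphi x) ∂m'| ≤ 2*C * ∫ x, lgm m (lphi x) ∂m' := by
    intro m' hpm hm'
    rw [← integral_sub (f.integrable m') (integrable_comp_lphi contG)]
    rw [← Real.norm_eq_abs]
    refine le_trans (norm_integral_le_integral_norm _) ?_
    rw [← integral_const_mul]
    refine integral_mono_ae (((f.integrable m').sub (integrable_comp_lphi contG)).norm)
      ((integrable_comp_lphi (lgm_continuous m)).const_mul (2*C)) ?_
    exact (ae_nonneg_of_null_Iio hm').mono fun x hx => ptbd x hx
  -- convergence of the two auxiliary sequences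
  have hG := weak_convergence_of_laplace_comp hμ hν hLaplace contG
  have hgm := weak_convergence_of_laplace_comp hμ hν hLaplace (lgm_continuous m)
  have hGev : ∀ᶠ n in atTop,
      dist (∫ x, G (lphi x) ∂(μ n)) (∫ x, G (lphi x) ∂ν) < ε/4 :=
    hG (Metric.ball_mem_nhds _ (by linarith))
  have hgev : ∀ᶠ n in atTop, (∫ x, lgm m (lphi x) ∂(μ n)) < 2*δ :=
    hgm.eventually_lt_const (by linarith)
  obtain ⟨N, hN⟩ := eventually_atTop.mp (hGev.and hgev)
  refine ⟨N, fun n hn => ?_⟩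
  obtain ⟨h1, h2⟩ := hN n hn
  have i1 := ibd (μ n) inferInstance (hμ n)
  have i2 := ibd ν inferInstance hν
  rw [Real.dist_eq] at h1 ⊢
  have t1 := abs_sub_le ((∫ x, f x ∂(μ n))) (∫ x, G (lphi x) ∂(μ n)) (∫ x, f x ∂ν)
  have t2 := abs_sub_le ((∫ x, G (lphi x) ∂(μ n))) (∫ x, G (lphi x) ∂ν) (∫ x, f x ∂ν)
  have t3 := abs_sub_comm (∫ x, f x ∂ν) (∫ x, G (lphi x) ∂ν)
  have e1 : 2*C * (∫ x, lgm m (lphi x) ∂(μ n)) ≤ 2*C * (2*δ) :=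
    mul_le_mul_of_nonneg_left h2.le (by positivity)
  have e2 : 2*C * (∫ x, lgm m (lphi x) ∂ν) ≤ 2*C * δ :=
    mul_le_mul_of_nonneg_left hm.le (by positivity)
  have e3 : 2*C*(2*δ) + 2*C*δ ≤ 6*(C+1)*δ := by nlinarith
  have hC1 : C + 1 ≠ 0 := by positivity
  have e4 : 6*(C+1)*δ = 6*ε/16 := by
    rw [hδdef]; field_simp
  linarith
end

section
/- Let (r_n) be a strictly increasing sequence of positive reals with r_n → ∞ and r_{n+1} - r_n → 0. Then for every c with 0 < c < 1, there exists a sequence (k_n) of indices with k_n ≥ n such that r_{k_n} - r_n → c as n → ∞. -/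
/-!
Take `k n` to be the first index after `n` at which `r` reaches the level `r n + c`. The
overshoot `r (k n) - (r n + c)` is then at most the last increment `r (k n) - r (k n - 1)`, and
`k n - 1 ≥ n`, so the overshoot tends to `0` because the increments do.
-/

open Filter Topology

theorem exists_lt_le_succ_of_tendsto_atTop {α : Type*} [LinearOrder α] {u : ℕ → α}
    (hu : Tendsto u atTop atTop) {n : ℕ} {a : α} (ha : u n < a) :
    ∃ j, n ≤ j ∧ u j < a ∧ a ≤ u (j + 1) := by
  obtain ⟨i, hi⟩ := (hu.comp (tendsto_add_atTop_nat n)).eventually_ge_atTop a |>.exists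
  obtain ⟨i, hlt, hle⟩ :=
    Nat.exists_not_and_succ_of_not_zero_of_exists (p := fun i => a ≤ u (i + n))
      (by simpa using ha) ⟨i, hi⟩
  exact ⟨i + n, Nat.le_add_left n i, not_le.mp hlt, by rwa [add_right_comm] at hle⟩

theorem exists_subseq_gap_general {r : ℕ → ℝ}
    (htop : Filter.Tendsto r Filter.atTop Filter.atTop)
    (hdiff : Filter.Tendsto (fun n => r (n + 1) - r n) Filter.atTop (nhds 0))
    {c : ℝ} (hc0 : 0 < c) :
    ∃ k : ℕ → ℕ, (∀ n, n ≤ k n) ∧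
      Filter.Tendsto (fun n => r (k n) - r n) Filter.atTop (nhds c) := by
  choose j hnj hlt hle using fun n =>
    exists_lt_le_succ_of_tendsto_atTop htop (lt_add_of_pos_right (r n) hc0)
  have hstep : Tendsto (fun n => r (j n + 1) - r (j n)) atTop (𝓝 0) :=
    hdiff.comp (tendsto_atTop_mono hnj tendsto_id)
  refine ⟨fun n => j n + 1, fun n => (hnj n).trans (Nat.le_succ _), ?_⟩
  refine tendsto_of_tendsto_of_tendsto_of_le_of_le tendsto_const_nhds
    (by simpa using hstep.const_add c) (fun n => ?_) (fun n => ?_)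
  · linarith [hle n]
  · linarith [hlt n]

theorem exists_subseq_gap {r : ℕ → ℝ} (hpos : ∀ n, 0 < r n) (hmono : StrictMono r)
    (htop : Filter.Tendsto r Filter.atTop Filter.atTop)
    (hdiff : Filter.Tendsto (fun n => r (n + 1) - r n) Filter.atTop (nhds 0))
    {c : ℝ} (hc0 : 0 < c) (hc1 : c < 1) :
    ∃ k : ℕ → ℕ, (∀ n, n ≤ k n) ∧
      Filter.Tendsto (fun n => r (k n) - r n) Filter.atTop (nhds c) :=
  exists_subseq_gap_general htop hdiff hc0
end

section
/- Let f, φ, ψ : ℝ → ℝ with f continuous and non-constant, and suppose f(x + y) = φ(y)·f(x) + ψ(y) for all x, y ∈ ℝ, where φ is not identically 1. Then there exist constants α ≠ 0, γ ≠ 0, c ∈ ℝ such that f(x) = α·e^{γx} + c, φ(x) = e^{γx}, and ψ(x) = c(1 - e^{γx}) for all x. -/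
/-!
Putting `x = 0` gives `ψ = f - f 0 · φ`, and comparing `f (x + y)` with `f (y + x)` shows that
`f - f 0` is proportional to `φ - 1`. Hence `f = α φ + c` and `ψ = c (1 - φ)`, with `α ≠ 0` since
`f` is not constant. Substituting back, `φ` is a continuous solution of `φ (x + y) = φ x φ y`
that does not vanish, so `log ∘ φ` is a continuous additive map, i.e. linear.
-/

open Real

section Pexider

variable {G K : Type*} [Field K] {f φ ψ : G → K}

theorem pexider_cross_eq [AddCommMonoid G] (heq : ∀ x y, f (x + y) = φ y * f x + ψ y) (x y : G) :
    (φ y - 1) * (f x - f 0) = (φ x - 1) * (f y - f 0) := by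
  have hψx := heq 0 x
  have hψy := heq 0 y
  have hxy := heq x y
  rw [add_comm] at hxy
  simp only [zero_add] at hψx hψy
  linear_combination heq y x - hxy - hψx + hψy

theorem exists_eq_mul_add_of_pexider [AddCommMonoid G] (heq : ∀ x y, f (x + y) = φ y * f x + ψ y)
    {z : G} (hz : φ z ≠ 1) :
    ∃ α c : K, (∀ x, f x = α * φ x + c) ∧ ∀ y, ψ y = c * (1 - φ y) := by
  set α := (f z - f 0) / (φ z - 1)
  have hf : ∀ x, f x = α * φ x + (f 0 - α) := fun x => by
    have h : α * (φ x - 1) = f x - f 0 := by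
      rw [div_mul_eq_mul_div, div_eq_iff (sub_ne_zero.mpr hz)]
      linear_combination -pexider_cross_eq heq x z
    linear_combination -h
  refine ⟨α, f 0 - α, hf, fun y => ?_⟩
  have hψ := heq 0 y
  rw [zero_add, hf y] at hψ
  linear_combination -hψ

theorem map_add_of_pexider [Add G] (heq : ∀ x y, f (x + y) = φ y * f x + ψ y) {α c : K}
    (hα : α ≠ 0) (hf : ∀ x, f x = α * φ x + c) (hψ : ∀ y, ψ y = c * (1 - φ y)) (x y : G) :
    φ (x + y) = φ x * φ y := by
  have h := heq x y
  rw [hf, hf, hψ] at h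
  exact mul_left_cancel₀ hα (by linear_combination h)

end Pexider

theorem pos_of_map_add_eq_mul {φ : ℝ → ℝ} (hadd : ∀ x y, φ (x + y) = φ x * φ y) {a : ℝ}
    (ha : φ a ≠ 0) (x : ℝ) : 0 < φ x := by
  have hne : ∀ y, φ y ≠ 0 := fun y hy => ha <| by
    rw [← add_sub_cancel y a, hadd, hy, zero_mul]
  rw [← add_halves x, hadd]
  exact mul_self_pos.mpr (hne _)

theorem eq_mul_of_continuous_of_map_add {g : ℝ → ℝ} (hg : Continuous g)
    (hadd : ∀ x y, g (x + y) = g x + g y) (x : ℝ) : g x = g 1 * x := by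
  simpa [mul_comm] using map_real_smul (AddMonoidHom.mk' g hadd) hg x 1

theorem exists_eq_exp_mul_of_continuous_of_map_add {φ : ℝ → ℝ} (hφ : Continuous φ)
    (hadd : ∀ x y, φ (x + y) = φ x * φ y) {a : ℝ} (ha : φ a ≠ 0) :
    ∃ γ, ∀ x, φ x = exp (γ * x) := by
  have hpos := pos_of_map_add_eq_mul hadd ha
  have hlog : ∀ x y, log (φ (x + y)) = log (φ x) + log (φ y) := fun x y => by
    rw [hadd, log_mul (hpos x).ne' (hpos y).ne']
  have hcont : Continuous fun x => log (φ x) := hφ.log fun x => (hpos x).ne'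
  refine ⟨log (φ 1), fun x => ?_⟩
  rw [← eq_mul_of_continuous_of_map_add hcont hlog, exp_log (hpos x)]

theorem pexider_exponential {f φ ψ : ℝ → ℝ} (hf : Continuous f)
    (hfnc : ¬ ∃ c : ℝ, ∀ x, f x = c) (hφ : ¬ ∀ x, φ x = 1)
    (heq : ∀ x y : ℝ, f (x + y) = φ y * f x + ψ y) :
    ∃ α γ c : ℝ, α ≠ 0 ∧ γ ≠ 0 ∧
      (∀ x, f x = α * Real.exp (γ * x) + c) ∧
      (∀ x, φ x = Real.exp (γ * x)) ∧
      (∀ x, ψ x = c * (1 - Real.exp (γ * x))) := by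
  push Not at hfnc hφ
  obtain ⟨z, hz⟩ := hφ
  obtain ⟨α, c, hfφ, hψφ⟩ := exists_eq_mul_add_of_pexider heq hz
  obtain ⟨a, ha⟩ := hfnc c
  have hαφa : α * φ a ≠ 0 := by rwa [hfφ, Ne, add_eq_right] at ha
  have hα : α ≠ 0 := left_ne_zero_of_mul hαφa
  have hφ_cont : Continuous φ := by
    have : φ = fun x => (f x - c) / α := funext fun x => by
      rw [hfφ, add_sub_cancel_right, mul_div_cancel_left₀ _ hα]
    rw [this]
    fun_prop
  obtain ⟨γ, hγ⟩ := exists_eq_exp_mul_of_continuous_of_map_add hφ_cont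
    (map_add_of_pexider heq hα hfφ hψφ) (right_ne_zero_of_mul hαφa)
  have hγ0 : γ ≠ 0 := fun h => hz (by rw [hγ, h, zero_mul, exp_zero])
  exact ⟨α, γ, c, hα, hγ0, fun x => by rw [hfφ, hγ], hγ, fun x => by rw [hψφ, hγ]⟩
end

section
/- Let c > 0 and let r_n > 0 be defined by n·(2/π)^{1/2}·(r_n^2 e^{r_n^2/2})^{-1} = c. Then r_n → ∞, and for every y > 0, G_n(y) := (2/π)^{1/2}·n·∫_0^y (1 - e^{-x}) e^{-(x+r_n)^2/2} dx → c as n → ∞. -/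
open Filter MeasureTheory Set

lemma GnHN_one_sub_exp_le (t : ℝ) : 1 - Real.exp (-t) ≤ t := by
  nlinarith [Real.add_one_le_exp (-t)]

lemma GnHN_slope_exp :
    Tendsto (fun t : ℝ => (Real.exp t - 1) / t) (nhdsWithin 0 {(0:ℝ)}ᶜ) (nhds 1) := by
  have h := Real.hasDerivAt_exp 0
  rw [hasDerivAt_iff_tendsto_slope] at h
  have : (fun t : ℝ => (Real.exp t - 1) / t) = slope Real.exp 0 := by
    ext t; simp [slope_def_field]
  rw [this]; simpa using h

lemma GnHN_tendsto_aux (u : ℝ) (hu : 0 < u) :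
    Tendsto (fun R : ℝ => R * (1 - Real.exp (-(u / R)))) atTop (nhds u) := by
  have h1 : Tendsto (fun R : ℝ => -(u / R)) atTop (nhdsWithin 0 {(0:ℝ)}ᶜ) := by
    apply tendsto_nhdsWithin_of_tendsto_nhds_of_eventually_within
    · simpa using (Tendsto.div_atTop (tendsto_const_nhds (x := u)) tendsto_id).neg
    · filter_upwards [eventually_gt_atTop (0:ℝ)] with R hR
      simp only [mem_compl_iff, mem_singleton_iff]
      have : 0 < u / R := div_pos hu hR
      intro h; rw [neg_eq_zero] at h; linarith
  have h2 : Tendsto (fun R : ℝ => u * ((Real.exp (-(u/R)) - 1) / (-(u/R)))) atTop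
      (nhds (u * 1)) := (GnHN_slope_exp.comp h1).const_mul u
  rw [mul_one] at h2
  apply h2.congr'
  filter_upwards [eventually_gt_atTop (0:ℝ)] with R hR
  have hR0 : R ≠ 0 := ne_of_gt hR
  have hu0 : u ≠ 0 := ne_of_gt hu
  have hur : u / R ≠ 0 := div_ne_zero hu0 hR0
  rw [mul_div_assoc', div_eq_iff (neg_ne_zero.mpr hur)]
  field_simp
  ring

lemma GnHN_bound_integrable : IntegrableOn (fun x : ℝ => x * Real.exp (-x)) (Ioi 0) := by
  have h := Real.GammaIntegral_convergent (s := 2) (by norm_num)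
  apply h.congr_fun ?_ measurableSet_Ioi
  intro x hx
  dsimp only
  rw [show (2:ℝ) - 1 = 1 by norm_num, Real.rpow_one]
  ring

lemma GnHN_bound_integral : ∫ x in Ioi (0:ℝ), x * Real.exp (-x) = 1 := by
  have h := Real.Gamma_eq_integral (s := 2) (by norm_num)
  have h2 : Real.Gamma 2 = 1 := by
    rw [show (2:ℝ) = 1 + 1 by norm_num, Real.Gamma_add_one one_ne_zero, Real.Gamma_one, mul_one]
  rw [← h2, h]
  apply setIntegral_congr_fun measurableSet_Ioi
  intro x hx
  dsimp only
  rw [show (2:ℝ) - 1 = 1 by norm_num, Real.rpow_one]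
  ring

lemma GnHN_r_tendsto {c : ℝ} (hc : 0 < c) {r : ℕ → ℝ} (hrpos : ∀ n, 0 < r n)
    (hr : ∀ n : ℕ, 1 ≤ n →
      (n : ℝ) * Real.sqrt (2 / Real.pi) * ((r n) ^ 2 * Real.exp ((r n) ^ 2 / 2))⁻¹ = c) :
    Tendsto r atTop atTop := by
  rw [tendsto_atTop_atTop]
  intro M
  set M' := max M 1 with hM'
  have hM'pos : (0:ℝ) < M' := lt_of_lt_of_le one_pos (le_max_right _ _)
  have hsq : (0:ℝ) < Real.sqrt (2 / Real.pi) := Real.sqrt_pos.mpr (by positivity)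
  obtain ⟨N, hN⟩ := exists_nat_gt (c * (M' ^ 2 * Real.exp (M' ^ 2 / 2)) / Real.sqrt (2 / Real.pi))
  refine ⟨max N 1, fun n hn => ?_⟩
  have hn1 : 1 ≤ n := le_trans (le_max_right _ _) hn
  have hnN : (N : ℝ) ≤ n := Nat.cast_le.mpr (le_trans (le_max_left _ _) hn)
  have heq := hr n hn1
  have hrn := hrpos n
  rw [mul_inv_eq_iff_eq_mul₀ (by positivity)] at heq
  have heq2 : (r n) ^ 2 * Real.exp ((r n) ^ 2 / 2) = (n : ℝ) * Real.sqrt (2 / Real.pi) / c := by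
    rw [heq, mul_div_cancel_left₀ _ hc.ne']
  have h3 : c * (M'^2 * Real.exp (M'^2/2)) < (n:ℝ) * Real.sqrt (2 / Real.pi) := by
    have h4 := mul_lt_mul_of_pos_right hN hsq
    rw [div_mul_cancel₀ _ hsq.ne'] at h4
    exact h4.trans_le (mul_le_mul_of_nonneg_right hnN hsq.le)
  have hgM : M' ^ 2 * Real.exp (M' ^ 2 / 2) < (r n) ^ 2 * Real.exp ((r n) ^ 2 / 2) := by
    rw [heq2, lt_div_iff₀ hc, mul_comm]
    exact h3
  have : M' < r n := by
    by_contra h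
    push_neg at h
    have h1 : (r n) ^ 2 ≤ M' ^ 2 := by nlinarith
    have h2 : Real.exp ((r n) ^ 2 / 2) ≤ Real.exp (M' ^ 2 / 2) := Real.exp_le_exp.mpr (by linarith)
    nlinarith [Real.exp_pos ((r n)^2/2), Real.exp_pos (M'^2/2), sq_nonneg (r n)]
  linarith [le_max_left M 1]

lemma GnHN_step_A {c R y : ℝ} (hR : 0 < R) (hy : 0 < y) (n : ℕ)
    (hkey : (n : ℝ) * Real.sqrt (2 / Real.pi) = c * (R ^ 2 * Real.exp (R ^ 2 / 2))) :
    Real.sqrt (2 / Real.pi) * (n : ℝ) *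
        ∫ x in (0:ℝ)..y, (1 - Real.exp (-x)) * Real.exp (-(x + R) ^ 2 / 2)
      = c * ∫ u : ℝ, (Ioc (0:ℝ) (y * R)).indicator
          (fun u => R * (1 - Real.exp (-(u / R))) * Real.exp (-(u ^ 2 / (2 * R ^ 2)) - u)) u := by
  have hR0 : R ≠ 0 := hR.ne'
  set h : ℝ → ℝ := fun u => (1 - Real.exp (-(u / R))) * Real.exp (-(u ^ 2 / (2 * R ^ 2)) - u) with hh
  have hcomp : ∀ x : ℝ, Real.exp (R ^ 2 / 2) * ((1 - Real.exp (-x)) * Real.exp (-(x + R) ^ 2 / 2))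
      = h (x * R) := by
    intro x
    simp only [hh]
    rw [mul_div_assoc, div_self hR0, mul_one]
    have h1 : (x * R) ^ 2 / (2 * R ^ 2) = x ^ 2 / 2 := by
      field_simp
    rw [h1, mul_left_comm, ← Real.exp_add]
    congr 2
    ring
  calc Real.sqrt (2 / Real.pi) * (n : ℝ) *
        ∫ x in (0:ℝ)..y, (1 - Real.exp (-x)) * Real.exp (-(x + R) ^ 2 / 2)
      = c * R ^ 2 * (Real.exp (R ^ 2 / 2) *
        ∫ x in (0:ℝ)..y, (1 - Real.exp (-x)) * Real.exp (-(x + R) ^ 2 / 2)) := by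
        rw [mul_comm (Real.sqrt _) (n:ℝ), hkey]; ring
    _ = c * R ^ 2 * ∫ x in (0:ℝ)..y, h (x * R) := by
        rw [← intervalIntegral.integral_const_mul]
        congr 1
        exact intervalIntegral.integral_congr fun x _ => hcomp x
    _ = c * R ^ 2 * (R⁻¹ * ∫ u in (0:ℝ)..(y * R), h u) := by
        rw [intervalIntegral.integral_comp_mul_right h hR0, zero_mul, smul_eq_mul]
    _ = c * (R * ∫ u in (0:ℝ)..(y * R), h u) := by
        field_simp
    _ = c * ∫ u in (0:ℝ)..(y * R), R * h u := by
        rw [intervalIntegral.integral_const_mul]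
    _ = c * ∫ u in Ioc (0:ℝ) (y * R), R * h u := by
        rw [intervalIntegral.integral_of_le (by positivity)]
    _ = c * ∫ u : ℝ, (Ioc (0:ℝ) (y * R)).indicator
          (fun u => R * (1 - Real.exp (-(u / R))) * Real.exp (-(u ^ 2 / (2 * R ^ 2)) - u)) u := by
        rw [integral_indicator measurableSet_Ioc]
        congr 1
        apply setIntegral_congr_fun measurableSet_Ioc
        intro u _
        simp only [hh]; ring

lemma GnHN_step_B {y : ℝ} (hy : 0 < y) {r : ℕ → ℝ} (hrpos : ∀ n, 0 < r n)
    (hrt : Tendsto r atTop atTop) :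
    Tendsto (fun n : ℕ => ∫ u : ℝ, (Ioc (0:ℝ) (y * r n)).indicator
        (fun u => r n * (1 - Real.exp (-(u / r n))) *
          Real.exp (-(u ^ 2 / (2 * (r n) ^ 2)) - u)) u) atTop (nhds 1) := by
  set F : ℕ → ℝ → ℝ := fun n u => (Ioc (0:ℝ) (y * r n)).indicator
      (fun u => r n * (1 - Real.exp (-(u / r n))) *
        Real.exp (-(u ^ 2 / (2 * (r n) ^ 2)) - u)) u with hF
  set f : ℝ → ℝ := fun u => (Ioi (0:ℝ)).indicator (fun u => u * Real.exp (-u)) u with hfdef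
  have hfint : ∫ u : ℝ, f u = 1 := by
    simp only [hfdef]
    rw [integral_indicator measurableSet_Ioi]
    exact GnHN_bound_integral
  have key : Tendsto (fun n : ℕ => ∫ u : ℝ, F n u) atTop (nhds (∫ u : ℝ, f u)) := by
    apply tendsto_integral_of_dominated_convergence f
    · intro n
      exact ((Measurable.indicator (by fun_prop) measurableSet_Ioc)).aestronglyMeasurable
    · exact (GnHN_bound_integrable.integrable_indicator measurableSet_Ioi)
    · -- bound
      intro n
      filter_upwards with a
      have hR := hrpos n
      by_cases ha : a ∈ Ioc (0:ℝ) (y * r n)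
      · simp only [hF]
        simp only [indicator_of_mem ha]
        obtain ⟨ha0, _⟩ := ha
        have hb1 : 0 ≤ 1 - Real.exp (-(a / r n)) := by
          have : Real.exp (-(a / r n)) ≤ 1 := by
            rw [Real.exp_le_one_iff]
            have : 0 < a / r n := div_pos ha0 hR
            linarith
          linarith
        have hb2 : r n * (1 - Real.exp (-(a / r n))) ≤ a := by
          have := GnHN_one_sub_exp_le (a / r n)
          calc r n * (1 - Real.exp (-(a / r n))) ≤ r n * (a / r n) :=
                mul_le_mul_of_nonneg_left this hR.le
            _ = a := by field_simp
        have hb3 : Real.exp (-(a ^ 2 / (2 * (r n) ^ 2)) - a) ≤ Real.exp (-a) := by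
          apply Real.exp_le_exp.mpr
          have : 0 ≤ a ^ 2 / (2 * (r n) ^ 2) := by positivity
          linarith
        have hnn : 0 ≤ r n * (1 - Real.exp (-(a / r n))) *
            Real.exp (-(a ^ 2 / (2 * (r n) ^ 2)) - a) := by positivity
        rw [Real.norm_eq_abs, abs_of_nonneg hnn]
        simp only [hfdef]
        simp only [indicator_of_mem (mem_Ioi.mpr ha0)]
        exact mul_le_mul hb2 hb3 (Real.exp_pos _).le ha0.le
      · simp only [hF]
        simp only [indicator_of_notMem ha]
        rw [norm_zero]
        simp only [hfdef]
        apply indicator_nonneg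
        intro u hu
        have : (0:ℝ) < u := hu
        positivity
    · -- pointwise limit
      filter_upwards with a
      by_cases ha : 0 < a
      · have hlim1 : Tendsto (fun n => r n * (1 - Real.exp (-(a / r n)))) atTop (nhds a) :=
          (GnHN_tendsto_aux a ha).comp hrt
        have hsq : Tendsto (fun n => 2 * (r n) ^ 2) atTop atTop := by
          apply Tendsto.const_mul_atTop two_pos
          have := hrt.atTop_mul_atTop₀ hrt
          apply this.congr
          intro n; ring
        have hlim2 : Tendsto (fun n => Real.exp (-(a ^ 2 / (2 * (r n) ^ 2)) - a)) atTop
            (nhds (Real.exp (-a))) := by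
          have h0 : Tendsto (fun n => a ^ 2 / (2 * (r n) ^ 2)) atTop (nhds 0) :=
            Tendsto.div_atTop tendsto_const_nhds hsq
          have h1 : Tendsto (fun n => -(a ^ 2 / (2 * (r n) ^ 2)) - a) atTop (nhds (-a)) := by
            have := (h0.neg).sub_const a
            simpa using this
          exact (Real.continuous_exp.tendsto _).comp h1
        have hlim : Tendsto (fun n => r n * (1 - Real.exp (-(a / r n))) *
            Real.exp (-(a ^ 2 / (2 * (r n) ^ 2)) - a)) atTop (nhds (a * Real.exp (-a))) :=
          hlim1.mul hlim2
        have hfa : f a = a * Real.exp (-a) := by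
          simp only [hfdef]; simp only [indicator_of_mem (mem_Ioi.mpr ha)]
        simp only [hfdef] at hfa ⊢
        rw [hfa]
        apply hlim.congr'
        have hev : ∀ᶠ n in atTop, a / y + 1 ≤ r n := hrt.eventually_ge_atTop (a / y + 1)
        filter_upwards [hev] with n hn
        have hmem : a ∈ Ioc (0:ℝ) (y * r n) := by
          constructor
          · exact ha
          · have : a / y + 1 ≤ r n := hn
            have h2 : y * (a / y + 1) ≤ y * r n := mul_le_mul_of_nonneg_left this hy.le
            have h3 : y * (a / y + 1) = a + y := by field_simp
            linarith
        simp only [hF]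
        simp only [indicator_of_mem hmem]
      · have hfa : f a = 0 := by
          simp only [hfdef]
          apply indicator_of_notMem
          simpa using ha
        simp only [hfdef] at hfa ⊢
        rw [hfa]
        have : ∀ n, F n a = 0 := by
          intro n
          simp only [hF]
          apply indicator_of_notMem
          intro hmem
          exact ha hmem.1
        simp only [this]
        exact tendsto_const_nhds (x := (0:ℝ)) (f := atTop (α := ℕ))

  rw [hfint] at key
  exact key

theorem Gn_limit_halfnormal {c : ℝ} (hc : 0 < c) {r : ℕ → ℝ} (hrpos : ∀ n, 0 < r n)
    (hr : ∀ n : ℕ, 1 ≤ n →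
      (n : ℝ) * Real.sqrt (2 / Real.pi) * ((r n) ^ 2 * Real.exp ((r n) ^ 2 / 2))⁻¹ = c) :
    Tendsto r atTop atTop ∧
      ∀ y : ℝ, 0 < y →
        Tendsto
          (fun n : ℕ =>
            Real.sqrt (2 / Real.pi) * (n : ℝ) *
              ∫ x in (0 : ℝ)..y, (1 - Real.exp (-x)) * Real.exp (-(x + r n) ^ 2 / 2))
          atTop (nhds c) := by
  have hrt : Tendsto r atTop atTop := GnHN_r_tendsto hc hrpos hr
  refine ⟨hrt, fun y hy => ?_⟩
  have hB := GnHN_step_B hy hrpos hrt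
  have hmain : Tendsto (fun n : ℕ => c * ∫ u : ℝ, (Ioc (0:ℝ) (y * r n)).indicator
      (fun u => r n * (1 - Real.exp (-(u / r n))) *
        Real.exp (-(u ^ 2 / (2 * (r n) ^ 2)) - u)) u) atTop (nhds c) := by
    have := hB.const_mul c
    simpa using this
  apply hmain.congr'
  filter_upwards [eventually_ge_atTop 1] with n hn
  have heq := hr n hn
  have hrn := hrpos n
  rw [mul_inv_eq_iff_eq_mul₀ (by positivity)] at heq
  exact (GnHN_step_A (hrpos n) hy n heq).symm
end
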